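/- Let L be an effect algebra and μ : L → ℂ a bounded additive measure. Then for every a ∈ L: sup{|μ(b)| : b ∈ L, b ≤ a} ≤ |μ|(a) ≤ 4·sup{|μ(b)| : b ∈ L, b ≤ a}. Consequently, μ is bounded if and only if μ has bounded variation (|μ|(1) < ∞). Moreover, μ is exhaustive if and only if |μ| is exhaustive. -/

import Mathlib

open Filter Topology
open scoped ENNReal NNReal

/-- An effect algebra: a partial commutative monoid with orthosupplementation
and the zero-one law. `D a b` means `a ⊕ b` is defined; `add` is the (junk-valued
outside `D`) total extension of `⊕`. -/
structure EffectAlgebra (L : Type*) where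
  D : L → L → Prop
  add : L → L → L
  zero : L
  one : L
  comm_def : ∀ {a b}, D a b → D b a
  comm : ∀ {a b}, D a b → add a b = add b a
  assoc_def₁ : ∀ {a b c}, D b c → D a (add b c) → D a b
  assoc_def₂ : ∀ {a b c}, D b c → D a (add b c) → D (add a b) c
  assoc : ∀ {a b c}, D b c → D a (add b c) → add (add a b) c = add a (add b c)
  orth : ∀ a, ∃! a', D a a' ∧ add a a' = one
  zero_one : ∀ {a}, D one a → a = zero

namespace EffectAlgebra

variable {L : Type*}

/-- The canonical order: `a ≤ b` iff `a ⊕ r = b` for some `r`. -/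
def le (E : EffectAlgebra L) (a b : L) : Prop := ∃ r, E.D a r ∧ E.add a r = b

/-- The orthosupplement `1 ⊖ a`. -/
noncomputable def compl (E : EffectAlgebra L) (a : L) : L := (E.orth a).choose

/-- Partial sums `a 0 ⊕ ⋯ ⊕ a n`. -/
def psum (E : EffectAlgebra L) (a : ℕ → L) : ℕ → L
  | 0 => a 0
  | n + 1 => E.add (E.psum a n) (a (n + 1))

/-- A sequence is orthogonal when all its finite orthosums are defined. -/
def Orthogonal (E : EffectAlgebra L) (a : ℕ → L) : Prop :=
  ∀ n, E.D (E.psum a n) (a (n + 1))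

/-- `s` is the supremum of the set `S` in the canonical order. -/
def IsSup (E : EffectAlgebra L) (S : Set L) (s : L) : Prop :=
  (∀ x ∈ S, E.le x s) ∧ ∀ u, (∀ x ∈ S, E.le x u) → E.le s u

/-- `s = ⊕ₙ a n`: the sequence is orthogonal and `s` is the sup of the finite orthosums. -/
def IsOrthoSum (E : EffectAlgebra L) (a : ℕ → L) (s : L) : Prop :=
  E.Orthogonal a ∧ E.IsSup (Set.range (E.psum a)) s

/-- Additive (finitely additive) measure. -/
def IsMeasure {G : Type*} [AddCommMonoid G] (E : EffectAlgebra L) (μ : L → G) : Prop :=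
  ∀ a b, E.D a b → μ (E.add a b) = μ a + μ b

/-- σ-additivity: `μ (⊕ₙ a n) = Σₙ μ (a n)` whenever the orthosum exists. -/
def SigmaAdditive {G : Type*} [AddCommMonoid G] [TopologicalSpace G]
    (E : EffectAlgebra L) (μ : L → G) : Prop :=
  ∀ a s, E.IsOrthoSum a s →
    Tendsto (fun n => ∑ k ∈ Finset.range n, μ (a k)) atTop (𝓝 (μ s))

/-- Exhaustivity: `μ (a n) → 0` along every orthogonal sequence. -/
def Exhaustive {G : Type*} [AddCommMonoid G] [TopologicalSpace G]
    (E : EffectAlgebra L) (μ : L → G) : Prop :=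
  ∀ a, E.Orthogonal a → Tendsto (fun n => μ (a n)) atTop (𝓝 0)

/-- A generator: every element is the sup of an increasing sequence from `B`. -/
def IsGenerator (E : EffectAlgebra L) (B : Set L) : Prop :=
  ∀ a : L, ∃ b : ℕ → L, (∀ n, b n ∈ B) ∧ (∀ n, E.le (b n) (b (n + 1)))
    ∧ E.IsSup (Set.range b) a

/-- Riesz decomposition property. -/
def RDP (E : EffectAlgebra L) : Prop :=
  ∀ a b c, E.D a b → E.le c (E.add a b) →
    ∃ c₁ c₂, E.D c₁ c₂ ∧ E.add c₁ c₂ = c ∧ E.le c₁ a ∧ E.le c₂ b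

/-- Strong Riesz decomposition property. -/
def sRDP (E : EffectAlgebra L) : Prop :=
  ∀ (a : ℕ → L) (s c : L), E.IsOrthoSum a s → E.le c s →
    ∃ c' : ℕ → L, E.IsOrthoSum c' c ∧ ∀ n, E.le (c' n) (a n)

/-- A natural basis: an orthogonal sequence of minimal nonzero elements with orthosum `1`. -/
def IsNaturalBasis (E : EffectAlgebra L) (b : ℕ → L) : Prop :=
  E.IsOrthoSum b E.one ∧
  ∀ n, b n ≠ E.zero ∧ ∀ c, c ≠ E.zero → E.le c (b n) → c = b n

/-- The set of finite orthosums of elements of the sequence `b`. -/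
def finOrthosums (E : EffectAlgebra L) (b : ℕ → L) : Set L :=
  { x | ∃ c : ℕ → L, (∀ n, c n = b n ∨ c n = E.zero) ∧ E.Orthogonal c ∧
        ∃ N, x = E.psum c N }

/-- A sequence of measures is pointwise convergent. -/
def PtwiseConv (μ : ℕ → L → ℝ) : Prop :=
  ∀ a : L, ∃ x : ℝ, Tendsto (fun i => μ i a) atTop (𝓝 x)

/-- Uniform exhaustivity of a sequence of measures. -/
def UnifExhaustive (E : EffectAlgebra L) (μ : ℕ → L → ℝ) : Prop :=
  ∀ a, E.Orthogonal a →
    TendstoUniformly (fun n (i : ℕ) => μ i (a n)) (fun _ => (0 : ℝ)) atTop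

/-- Uniform strong additivity of a sequence of measures. -/
def UnifStronglyAdditive (E : EffectAlgebra L) (μ : ℕ → L → ℝ) : Prop :=
  ∀ a, E.Orthogonal a → ∃ f : ℕ → ℝ,
    TendstoUniformly (fun n (i : ℕ) => ∑ k ∈ Finset.range n, μ i (a k)) f atTop

/-- The Nikodym property. -/
def Nikodym (E : EffectAlgebra L) : Prop :=
  ∀ μ : ℕ → L → ℝ, (∀ i, E.IsMeasure (μ i)) → (∀ i, ∃ M, ∀ a, |μ i a| ≤ M) →
    (∀ a : L, ∃ M, ∀ i, |μ i a| ≤ M) → ∃ M, ∀ i, ∀ a : L, |μ i a| ≤ M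

/-- The Grothendieck property. -/
def Grothendieck (E : EffectAlgebra L) : Prop :=
  ∀ μ : ℕ → L → ℝ, (∀ i, E.IsMeasure (μ i)) → (∀ i, ∃ M, ∀ a, |μ i a| ≤ M) →
    PtwiseConv μ → (∃ M, ∀ i, ∀ a : L, |μ i a| ≤ M) → E.UnifStronglyAdditive μ

/-- The Vitali-Hahn-Saks property. -/
def VHS (E : EffectAlgebra L) : Prop :=
  ∀ μ : ℕ → L → ℝ, (∀ i, E.IsMeasure (μ i)) → (∀ i, ∃ M, ∀ a, |μ i a| ≤ M) →
    PtwiseConv μ → E.UnifExhaustive μ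

/-- The σ-Nikodym property. -/
def SigmaNikodym (E : EffectAlgebra L) : Prop :=
  ∀ μ : ℕ → L → ℝ, (∀ i, E.IsMeasure (μ i)) → (∀ i, E.SigmaAdditive (μ i)) →
    (∀ i, ∃ M, ∀ a, |μ i a| ≤ M) →
    (∀ a : L, ∃ M, ∀ i, |μ i a| ≤ M) → ∃ M, ∀ i, ∀ a : L, |μ i a| ≤ M

/-- The σ-Vitali-Hahn-Saks property. -/
def SigmaVHS (E : EffectAlgebra L) : Prop :=
  ∀ μ : ℕ → L → ℝ, (∀ i, E.IsMeasure (μ i)) → (∀ i, E.SigmaAdditive (μ i)) →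
    (∀ i, ∃ M, ∀ a, |μ i a| ≤ M) → PtwiseConv μ → E.UnifExhaustive μ

/-- A bounding subset. -/
def Bounding (E : EffectAlgebra L) (B : Set L) : Prop :=
  ∀ (G : Type) [NormedAddCommGroup G], ∀ μ : ℕ → L → G,
    (∀ i, E.IsMeasure (μ i)) → (∀ i, E.SigmaAdditive (μ i)) →
    (∀ a : L, ∃ M, ∀ i, ‖μ i a‖ ≤ M) →
    ((∃ M, ∀ i, ∀ b ∈ B, ‖μ i b‖ ≤ M) ↔ (∃ M, ∀ i, ∀ a : L, ‖μ i a‖ ≤ M))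

/-- A natural subset: a generator closed under orthosums of orthogonal pairs all of whose
orthogonal-complement slices are bounding. -/
def NaturalSubset (E : EffectAlgebra L) (B : Set L) : Prop :=
  E.IsGenerator B ∧ (∀ b ∈ B, ∀ c ∈ B, E.D b c → E.add b c ∈ B) ∧
    ∀ b ∈ B, E.Bounding {c ∈ B | E.D c b}

/-- A natural effect algebra: one admitting a natural subset. -/
def Natural (E : EffectAlgebra L) : Prop := ∃ B, E.NaturalSubset B

/-- The orthogonally sequential property. -/
def OSP (E : EffectAlgebra L) : Prop :=
  ∀ b : ℕ → L, ∃ c : ℕ → L, E.Orthogonal c ∧ (∀ k, E.le (c k) (b k)) ∧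
    ∀ (a : L) (k₀ : ℕ), E.le a (b k₀) → (∀ i, i ≠ k₀ → E.le (b i) (E.compl a)) →
      E.le a (c k₀)

/-- The subsequential interpolation property. -/
def SIP (E : EffectAlgebra L) : Prop :=
  ∀ a : ℕ → L, E.Orthogonal a → ∀ M : Set ℕ, M.Infinite →
    ∃ (x : L) (N : Set ℕ), N ⊆ M ∧ N.Infinite ∧ (∀ n ∈ N, E.le (a n) x) ∧
      ∀ n ∉ N, E.le (a n) (E.compl x)

/-- Iterated orthosum starting from `x`: all steps defined. -/
def OrthoFrom (E : EffectAlgebra L) : L → List L → Prop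
  | _, [] => True
  | x, y :: ys => E.D x y ∧ E.OrthoFrom (E.add x y) ys

/-- The orthosum `x ⊕ y₁ ⊕ ⋯ ⊕ yₙ` of a nonempty list. -/
def psumList (E : EffectAlgebra L) : L → List L → L
  | x, [] => x
  | x, y :: ys => E.psumList (E.add x y) ys

/-- The variation of a measure: the sup over finite decompositions
`e = e₁ ⊕ ⋯ ⊕ eₙ` of `Σ ‖μ eᵢ‖`, valued in `[0,∞]`. -/
noncomputable def variation {G : Type*} [NormedAddCommGroup G]
    (E : EffectAlgebra L) (μ : L → G) (e : L) : ℝ≥0∞ :=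
  sSup { v : ℝ≥0∞ | ∃ (x : L) (xs : List L), E.OrthoFrom x xs ∧ E.psumList x xs = e ∧
    v = ((x :: xs).map fun y => (‖μ y‖₊ : ℝ≥0∞)).sum }

end EffectAlgebra

/-!
If `a = a₁ ⊕ ⋯ ⊕ aₙ`, collecting the pieces on which `Re μ` is nonnegative, resp. negative, gives
two elements `b₁, b₂ ≤ a` with `Σ |Re μ aᵢ| = Re μ b₁ - Re μ b₂ ≤ ‖μ b₁‖ + ‖μ b₂‖`; doing the same
for `Im μ` bounds `Σ ‖μ aᵢ‖` by four values `‖μ b‖` with `b ≤ a`. The lower bound comes from the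
two-piece decompositions `a = b ⊕ r`. For exhaustivity, elements `bₙ ≤ aₙ` chosen below the terms
of an orthogonal sequence again form an orthogonal sequence, so `sup_{b ≤ aₙ} ‖μ b‖ → 0`.
-/

namespace EffectAlgebra

variable {L : Type*} (E : EffectAlgebra L)

lemma assoc_of_D_add_left {a b c : L} (hab : E.D a b) (h : E.D (E.add a b) c) :
    E.D b c ∧ E.D a (E.add b c) ∧ E.add (E.add a b) c = E.add a (E.add b c) := by
  have hc : E.D c (E.add a b) := E.comm_def h
  have hca : E.D c a := E.assoc_def₁ hab hc
  have hb : E.D b (E.add c a) := E.comm_def (E.assoc_def₂ hab hc)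
  have hbca : E.D (E.add b c) a := E.assoc_def₂ hca hb
  refine ⟨E.assoc_def₁ hca hb, E.comm_def hbca, ?_⟩
  calc E.add (E.add a b) c = E.add c (E.add a b) := E.comm h
    _ = E.add (E.add c a) b := (E.assoc hab hc).symm
    _ = E.add b (E.add c a) := E.comm (E.assoc_def₂ hab hc)
    _ = E.add (E.add b c) a := (E.assoc hca hb).symm
    _ = E.add a (E.add b c) := E.comm hbca

lemma D_zero_right_and_add_zero (z : L) : E.D z E.zero ∧ E.add z E.zero = z := by
  obtain ⟨one', ⟨hD1, hadd1⟩, -⟩ := E.orth E.one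
  obtain rfl := E.zero_one hD1
  obtain ⟨z', ⟨hzz', hadd⟩, -⟩ := E.orth z
  have hz'z : E.D z' z := E.comm_def hzz'
  have hsum : E.add z' z = E.one := (E.comm hz'z).trans hadd
  obtain ⟨hz0, hz'D, heq⟩ := E.assoc_of_D_add_left hz'z (hsum ▸ hD1)
  refine ⟨hz0, ?_⟩
  -- both `z ⊕ 0` and `z` are orthosupplements of `z'`
  obtain ⟨_, -, huniq⟩ := E.orth z'
  exact (huniq _ ⟨hz'D, by rw [← heq, hsum, hadd1]⟩).trans (huniq _ ⟨hz'z, hsum⟩).symm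

lemma D_zero_right (z : L) : E.D z E.zero := (E.D_zero_right_and_add_zero z).1

lemma add_zero (z : L) : E.add z E.zero = z := (E.D_zero_right_and_add_zero z).2

lemma D_zero_left (z : L) : E.D E.zero z := E.comm_def (E.D_zero_right z)

lemma zero_add (z : L) : E.add E.zero z = z := by
  rw [E.comm (E.D_zero_left z), E.add_zero]

lemma le_refl (z : L) : E.le z z := ⟨E.zero, E.D_zero_right z, E.add_zero z⟩

lemma zero_le (z : L) : E.le E.zero z := ⟨z, E.D_zero_left z, E.zero_add z⟩

lemma le_one (a : L) : E.le a E.one := by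
  obtain ⟨a', ha', -⟩ := E.orth a
  exact ⟨a', ha'⟩

lemma le_trans {a b c : L} (hab : E.le a b) (hbc : E.le b c) : E.le a c := by
  obtain ⟨r, hr, rfl⟩ := hab
  obtain ⟨s, hs, rfl⟩ := hbc
  obtain ⟨-, hD, heq⟩ := E.assoc_of_D_add_left hr hs
  exact ⟨E.add r s, hD, heq.symm⟩

lemma D_mono_left {a x y : L} (hax : E.le a x) (h : E.D x y) :
    E.D a y ∧ E.le (E.add a y) (E.add x y) := by
  obtain ⟨r, har, rfl⟩ := hax
  obtain ⟨hry, haD, heq⟩ := E.assoc_of_D_add_left har h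
  have hyr : E.D y r := E.comm_def hry
  rw [E.comm hry] at haD heq
  refine ⟨E.assoc_def₁ hyr haD, r, E.assoc_def₂ hyr haD, ?_⟩
  rw [E.assoc hyr haD, heq]

lemma D_mono {a b x y : L} (hax : E.le a x) (hby : E.le b y) (h : E.D x y) :
    E.D a b ∧ E.le (E.add a b) (E.add x y) := by
  obtain ⟨hay, hle₁⟩ := E.D_mono_left hax h
  obtain ⟨hba, hle₂⟩ := E.D_mono_left hby (E.comm_def hay)
  refine ⟨E.comm_def hba, ?_⟩
  rw [← E.comm (E.comm_def hba), ← E.comm hay] at hle₂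
  exact E.le_trans hle₂ hle₁

lemma orthoFrom_map_le {m : L → L} (hm : ∀ y, E.le (m y) y) :
    ∀ (xs : List L) {x x' : L}, E.le x' x → E.OrthoFrom x xs →
      E.OrthoFrom x' (xs.map m) ∧ E.le (E.psumList x' (xs.map m)) (E.psumList x xs)
  | [], _, _, hle, _ => ⟨trivial, hle⟩
  | y :: ys, _, _, hle, ⟨hxy, hrest⟩ =>
    have ⟨hD, hle'⟩ := E.D_mono hle (hm y) hxy
    have ⟨ho, hps⟩ := orthoFrom_map_le hm ys hle' hrest
    ⟨⟨hD, ho⟩, hps⟩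

section Measure

variable {E} {G : Type*}

lemma IsMeasure.map_zero [AddCancelCommMonoid G] {μ : L → G} (hμ : E.IsMeasure μ) :
    μ E.zero = 0 := by
  have h := hμ E.zero E.zero (E.D_zero_right E.zero)
  rwa [E.add_zero, left_eq_add] at h

lemma IsMeasure.comp [AddCommMonoid G] {H : Type*} [AddCommMonoid H] {μ : L → G}
    (hμ : E.IsMeasure μ) (φ : G →+ H) : E.IsMeasure (φ ∘ μ) := fun a b hab => by
  simp only [Function.comp_apply, hμ a b hab, map_add]

lemma IsMeasure.map_psumList [AddCommMonoid G] {μ : L → G} (hμ : E.IsMeasure μ) :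
    ∀ (xs : List L) {x : L}, E.OrthoFrom x xs → μ (E.psumList x xs) = ((x :: xs).map μ).sum
  | [], _, _ => by simp [psumList]
  | y :: ys, x, ⟨hxy, hrest⟩ => by
    simp only [psumList, hμ.map_psumList ys hrest, List.map_cons, List.sum_cons, hμ x y hxy,
      add_assoc]

lemma IsMeasure.exists_le_eq_sum_ite [AddCancelCommMonoid G] {μ : L → G}
    (hμ : E.IsMeasure μ) (p : L → Prop) [DecidablePred p] {x : L} {xs : List L}
    (hxs : E.OrthoFrom x xs) :
    ∃ b, E.le b (E.psumList x xs) ∧ μ b = ((x :: xs).map fun y => if p y then μ y else 0).sum := by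
  set m : L → L := fun y => if p y then y else E.zero
  have hm : ∀ y, E.le (m y) y := fun y => by
    by_cases hy : p y
    · simpa [m, hy] using E.le_refl y
    · simpa [m, hy] using E.zero_le y
  obtain ⟨ho, hle⟩ := E.orthoFrom_map_le hm xs (hm x) hxs
  refine ⟨_, hle, ?_⟩
  rw [hμ.map_psumList _ ho, ← List.map_cons, List.map_map]
  congr 1
  refine List.map_congr_left fun y _ => ?_
  by_cases hy : p y <;> simp [m, hy, hμ.map_zero]

lemma IsMeasure.exists_sum_abs_eq_sub {ν : L → ℝ} (hν : E.IsMeasure ν) {x : L} {xs : List L}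
    (hxs : E.OrthoFrom x xs) :
    ∃ b₁ b₂, E.le b₁ (E.psumList x xs) ∧ E.le b₂ (E.psumList x xs) ∧
      ((x :: xs).map fun y => |ν y|).sum = ν b₁ - ν b₂ := by
  obtain ⟨b₁, hle₁, hb₁⟩ := hν.exists_le_eq_sum_ite (fun y => 0 ≤ ν y) hxs
  obtain ⟨b₂, hle₂, hb₂⟩ := hν.exists_le_eq_sum_ite (fun y => ν y < 0) hxs
  refine ⟨b₁, b₂, hle₁, hle₂, ?_⟩
  rw [eq_sub_iff_add_eq, hb₁, hb₂, ← List.sum_map_add]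
  congr 1
  refine List.map_congr_left fun y _ => ?_
  rcases le_or_gt 0 (ν y) with hy | hy
  · simp [hy, abs_of_nonneg hy, not_lt.mpr hy]
  · simp [hy, abs_of_neg hy, not_le.mpr hy]

end Measure

noncomputable def supNormBelow {G : Type*} [NormedAddCommGroup G] (μ : L → G) (a : L) : ℝ≥0∞ :=
  ⨆ b ∈ {x : L | E.le x a}, (‖μ b‖₊ : ℝ≥0∞)

variable {E}

lemma Orthogonal.of_le {a b : ℕ → L} (ha : E.Orthogonal a) (hba : ∀ n, E.le (b n) (a n)) :
    E.Orthogonal b := by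
  have hpsum : ∀ n, E.le (E.psum b n) (E.psum a n) := by
    intro n
    induction n with
    | zero => exact hba 0
    | succ n ih => exact (E.D_mono ih (hba (n + 1)) (ha n)).2
  exact fun n => (E.D_mono (hpsum n) (hba (n + 1)) (ha n)).1

lemma enorm_le_supNormBelow {G : Type*} [NormedAddCommGroup G] (μ : L → G) {a b : L}
    (h : E.le b a) : ‖μ b‖ₑ ≤ E.supNormBelow μ a :=
  le_biSup (fun b => (‖μ b‖₊ : ℝ≥0∞)) h

lemma enorm_le_variation {G : Type*} [NormedAddCommGroup G] (μ : L → G) {a b : L}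
    (h : E.le b a) : ‖μ b‖ₑ ≤ E.variation μ a := by
  obtain ⟨r, hD, hadd⟩ := h
  refine le_sSup_of_le ⟨b, [r], ⟨hD, trivial⟩, hadd, rfl⟩ ?_
  simp [enorm_eq_nnnorm]

lemma supNormBelow_le_variation {G : Type*} [NormedAddCommGroup G] (μ : L → G) (a : L) :
    E.supNormBelow μ a ≤ E.variation μ a :=
  iSup₂_le fun _ hb => enorm_le_variation μ hb

lemma IsMeasure.variation_le_four_mul_supNormBelow {μ : L → ℂ} (hμ : E.IsMeasure μ) (a : L) :
    E.variation μ a ≤ 4 * E.supNormBelow μ a := by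
  refine sSup_le ?_
  rintro v ⟨x, xs, hxs, rfl, rfl⟩
  obtain ⟨b₁, b₂, h₁, h₂, hre⟩ := (hμ.comp Complex.reAddGroupHom).exists_sum_abs_eq_sub hxs
  obtain ⟨b₃, b₄, h₃, h₄, him⟩ := (hμ.comp Complex.imAddGroupHom).exists_sum_abs_eq_sub hxs
  simp only [Function.comp_apply, Complex.coe_reAddGroupHom, Complex.coe_imAddGroupHom]
    at hre him
  have hreal : ((x :: xs).map fun y => ‖μ y‖).sum ≤ ‖μ b₁‖ + ‖μ b₂‖ + (‖μ b₃‖ + ‖μ b₄‖) :=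
    calc ((x :: xs).map fun y => ‖μ y‖).sum
        ≤ ((x :: xs).map fun y => |(μ y).re| + |(μ y).im|).sum :=
          List.sum_le_sum fun y _ => Complex.norm_le_abs_re_add_abs_im (μ y)
      _ = (μ b₁).re - (μ b₂).re + ((μ b₃).im - (μ b₄).im) := by
          rw [List.sum_map_add, hre, him]
      _ ≤ ‖μ b₁‖ + ‖μ b₂‖ + (‖μ b₃‖ + ‖μ b₄‖) := by
          gcongr <;> linarith [Complex.re_le_norm (μ b₁), Complex.im_le_norm (μ b₃),
            (abs_le.mp (Complex.abs_re_le_norm (μ b₂))).1,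
            (abs_le.mp (Complex.abs_im_le_norm (μ b₄))).1]
  have hnn : ((x :: xs).map fun y => ‖μ y‖₊).sum ≤ ‖μ b₁‖₊ + ‖μ b₂‖₊ + (‖μ b₃‖₊ + ‖μ b₄‖₊) := by
    rw [← NNReal.coe_le_coe]
    simpa [NNReal.coe_list_sum, Function.comp_def] using hreal
  set S := E.supNormBelow μ (E.psumList x xs)
  calc ((x :: xs).map fun y => (‖μ y‖₊ : ℝ≥0∞)).sum
      = (((x :: xs).map fun y => ‖μ y‖₊).sum : ℝ≥0) :=
        ((map_list_sum ENNReal.ofNNRealHom _).trans (by rw [List.map_map]; rfl)).symm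
    _ ≤ ((‖μ b₁‖₊ + ‖μ b₂‖₊ + (‖μ b₃‖₊ + ‖μ b₄‖₊) : ℝ≥0) : ℝ≥0∞) := ENNReal.coe_le_coe.mpr hnn
    _ = ‖μ b₁‖ₑ + ‖μ b₂‖ₑ + (‖μ b₃‖ₑ + ‖μ b₄‖ₑ) := by simp only [enorm_eq_nnnorm]; push_cast; rfl
    _ ≤ S + S + (S + S) := by
        gcongr <;> exact enorm_le_supNormBelow μ ‹_›
    _ = 4 * S := by ring

lemma IsMeasure.exists_norm_le_iff_variation_one_lt_top {ν : L → ℂ} (hν : E.IsMeasure ν) :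
    (∃ M : ℝ, ∀ a, ‖ν a‖ ≤ M) ↔ E.variation ν E.one < ⊤ := by
  constructor
  · rintro ⟨M, hM⟩
    calc E.variation ν E.one ≤ 4 * E.supNormBelow ν E.one :=
          hν.variation_le_four_mul_supNormBelow _
      _ ≤ 4 * ENNReal.ofReal M := by
          gcongr
          refine iSup₂_le fun b _ => ?_
          rw [← enorm_eq_nnnorm, ← ofReal_norm]
          exact ENNReal.ofReal_le_ofReal (hM b)
      _ < ⊤ := ENNReal.mul_lt_top ENNReal.ofNat_lt_top ENNReal.ofReal_lt_top
  · intro h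
    refine ⟨(E.variation ν E.one).toReal, fun a => ?_⟩
    simpa using ENNReal.toReal_mono h.ne (enorm_le_variation ν (E.le_one a))

lemma Exhaustive.tendsto_supNormBelow {G : Type*} [NormedAddCommGroup G] {μ : L → G}
    (hμ : E.Exhaustive μ) {a : ℕ → L} (ha : E.Orthogonal a) :
    Tendsto (fun n => E.supNormBelow μ (a n)) atTop (𝓝 0) := by
  rw [ENNReal.tendsto_nhds_zero]
  intro ε hε
  have hwitness : ∀ n, ∃ b, E.le b (a n) ∧ (E.supNormBelow μ (a n) ≤ ε ∨ ε < ‖μ b‖ₑ) := by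
    intro n
    by_cases h : E.supNormBelow μ (a n) ≤ ε
    · exact ⟨a n, E.le_refl _, Or.inl h⟩
    · obtain ⟨b, hb, hεb⟩ := lt_biSup_iff.mp (not_le.mp h)
      exact ⟨b, hb, Or.inr hεb⟩
  choose b hba hb using hwitness
  have hbμ := tendsto_zero_iff_enorm_tendsto_zero.mp (hμ b (ha.of_le hba))
  filter_upwards [ENNReal.tendsto_nhds_zero.mp hbμ ε hε] with n hn
  exact (hb n).resolve_right (not_lt.mpr hn)

lemma IsMeasure.exhaustive_iff_tendsto_variation {μ : L → ℂ} (hμ : E.IsMeasure μ) :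
    E.Exhaustive μ ↔ ∀ a, E.Orthogonal a → Tendsto (fun n => E.variation μ (a n)) atTop (𝓝 0) := by
  refine ⟨fun hex a ha => ?_, fun hvar a ha => ?_⟩
  · have h4 : Tendsto (fun n => 4 * E.supNormBelow μ (a n)) atTop (𝓝 0) := by
      simpa using
        ENNReal.Tendsto.const_mul (hex.tendsto_supNormBelow ha) (Or.inr ENNReal.ofNat_ne_top)
    exact tendsto_nhds_bot_mono' h4 fun n => hμ.variation_le_four_mul_supNormBelow (a n)
  · exact tendsto_zero_iff_enorm_tendsto_zero.mpr
      (tendsto_nhds_bot_mono' (hvar a ha) fun n => enorm_le_variation μ (E.le_refl (a n)))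

end EffectAlgebra

open EffectAlgebra in
theorem stmt19_general {L : Type*} (E : EffectAlgebra L) (μ : L → ℂ)
    (hμ : E.IsMeasure μ) :
    (∀ a : L,
        (⨆ b ∈ {x : L | E.le x a}, (‖μ b‖₊ : ℝ≥0∞)) ≤ E.variation μ a ∧
        E.variation μ a ≤ 4 * ⨆ b ∈ {x : L | E.le x a}, (‖μ b‖₊ : ℝ≥0∞)) ∧
    (∀ ν : L → ℂ, E.IsMeasure ν →
        ((∃ M : ℝ, ∀ a : L, ‖ν a‖ ≤ M) ↔ E.variation ν E.one < ⊤)) ∧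
    (E.Exhaustive μ ↔
        ∀ a : ℕ → L, E.Orthogonal a →
          Filter.Tendsto (fun n => E.variation μ (a n)) Filter.atTop (nhds 0)) := by
  exact ⟨fun a => ⟨supNormBelow_le_variation μ a, hμ.variation_le_four_mul_supNormBelow a⟩,
    fun ν hν => hν.exists_norm_le_iff_variation_one_lt_top, hμ.exhaustive_iff_tendsto_variation⟩

open EffectAlgebra in
/-- For a bounded complex measure on an effect algebra: two-sided estimates of the
variation by suprema over smaller elements; boundedness is equivalent to bounded
variation; and exhaustivity is equivalent to exhaustivity of the variation. -/
theorem stmt19 {L : Type*} (E : EffectAlgebra L) (μ : L → ℂ)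
    (hμ : E.IsMeasure μ) (hb : ∃ M : ℝ, ∀ a : L, ‖μ a‖ ≤ M) :
    (∀ a : L,
        (⨆ b ∈ {x : L | E.le x a}, (‖μ b‖₊ : ℝ≥0∞)) ≤ E.variation μ a ∧
        E.variation μ a ≤ 4 * ⨆ b ∈ {x : L | E.le x a}, (‖μ b‖₊ : ℝ≥0∞)) ∧
    (∀ ν : L → ℂ, E.IsMeasure ν →
        ((∃ M : ℝ, ∀ a : L, ‖ν a‖ ≤ M) ↔ E.variation ν E.one < ⊤)) ∧
    (E.Exhaustive μ ↔
        ∀ a : ℕ → L, E.Orthogonal a →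
          Filter.Tendsto (fun n => E.variation μ (a n)) Filter.atTop (nhds 0)) :=
  stmt19_general E μ hμ
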